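/- Let φ and ψ be MR-formulas in the variables p_1,…,p_n. If there exist a Kripke model M and a point w with M, w ⊨ φ and M, w ⊭ ψ, then there exists a node T_u of the n-universal model T(n) such that T(n), T_u ⊨ φ and T(n), T_u ⊭ ψ. -/

import Mathlib

/-! ## Formulas of intuitionistic propositional logic -/

inductive Formula : Type
  | bot : Formula
  | var : ℕ → Formula
  | and : Formula → Formula → Formula
  | or  : Formula → Formula → Formula
  | imp : Formula → Formula → Formula
  deriving DecidableEq

namespace Formula

def top : Formula := imp bot bot

def iff_ (φ ψ : Formula) : Formula := and (imp φ ψ) (imp ψ φ)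

/-- `φ` contains no implication at all. -/
def noImp : Formula → Prop
  | bot => True
  | var _ => True
  | and φ ψ => noImp φ ∧ noImp ψ
  | or φ ψ => noImp φ ∧ noImp ψ
  | imp _ _ => False

/-- NNIL-formulas: no nesting of implications to the left. -/
def IsNNIL : Formula → Prop
  | bot => True
  | var _ => True
  | and φ ψ => IsNNIL φ ∧ IsNNIL ψ
  | or φ ψ => IsNNIL φ ∧ IsNNIL ψ
  | imp φ ψ => noImp φ ∧ IsNNIL ψ

/-- `φ` is an `n`-formula: all its propositional variables are among `p_0, …, p_{n-1}`. -/
def varsBelow (n : ℕ) : Formula → Prop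
  | bot => True
  | var p => p < n
  | and φ ψ => varsBelow n φ ∧ varsBelow n ψ
  | or φ ψ => varsBelow n φ ∧ varsBelow n ψ
  | imp φ ψ => varsBelow n φ ∧ varsBelow n ψ

/-- the propositional variable `p` occurs in the formula -/
def occurs (p : ℕ) : Formula → Prop
  | bot => False
  | var q => q = p
  | and φ ψ => occurs p φ ∨ occurs p ψ
  | or φ ψ => occurs p φ ∨ occurs p ψ
  | imp φ ψ => occurs p φ ∨ occurs p ψ

/-- uniform substitution -/
def subst (σ : ℕ → Formula) : Formula → Formula
  | bot => bot
  | var p => σ p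
  | and φ ψ => and (subst σ φ) (subst σ ψ)
  | or φ ψ => or (subst σ φ) (subst σ ψ)
  | imp φ ψ => imp (subst σ φ) (subst σ ψ)

end Formula

/-- finite conjunction (empty conjunction is ⊤) -/
def listAnd : List Formula → Formula
  | [] => Formula.top
  | φ :: l => Formula.and φ (listAnd l)

/-- finite disjunction (empty disjunction is ⊥) -/
def listOr : List Formula → Formula
  | [] => Formula.bot
  | φ :: l => Formula.or φ (listOr l)

/-! ## Kripke structures, models and satisfaction -/

/-- raw Kripke structure: worlds, relation, Boolean valuation -/
structure KStruct where
  W : Type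
  R : W → W → Prop
  V : W → ℕ → Bool

namespace KStruct

/-- a Kripke model: `R` is a partial order and `V` is persistent -/
def IsModel (M : KStruct) : Prop :=
  (∀ w, M.R w w) ∧
  (∀ w u v, M.R w u → M.R u v → M.R w v) ∧
  (∀ w u, M.R w u → M.R u w → w = u) ∧
  (∀ w u p, M.R w u → M.V w p = true → M.V u p = true)

/-- an `n`-model: a Kripke model whose valuation is restricted to the variables `p_0,…,p_{n-1}` -/
def IsNModel (M : KStruct) (n : ℕ) : Prop :=
  M.IsModel ∧ ∀ w p, n ≤ p → M.V w p = false

/-- intuitionistic satisfaction -/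
def sat (M : KStruct) : M.W → Formula → Prop
  | _, Formula.bot => False
  | w, Formula.var p => M.V w p = true
  | w, Formula.and φ ψ => M.sat w φ ∧ M.sat w ψ
  | w, Formula.or φ ψ => M.sat w φ ∨ M.sat w ψ
  | w, Formula.imp φ ψ => ∀ u, M.R w u → M.sat u φ → M.sat u ψ

/-- the submodel on a subset of the worlds -/
def restrict (M : KStruct) (S : Set M.W) : KStruct where
  W := S
  R := fun a b => M.R a.1 b.1
  V := fun a p => M.V a.1 p

end KStruct

/-- monotonic map between Kripke structures: preserves the order and the colors -/
def Monotonic (M N : KStruct) (f : M.W → N.W) : Prop :=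
  (∀ w u, M.R w u → N.R (f w) (f u)) ∧ (∀ w p, N.V (f w) p = M.V w p)

/-- p-morphism: a monotonic map satisfying the forth condition -/
def PMorphism (M N : KStruct) (f : M.W → N.W) : Prop :=
  Monotonic M N f ∧ ∀ w u', N.R (f w) u' → ∃ u, M.R w u ∧ f u = u'

/-- MR: the class of formulas reflected by monotonic maps between Kripke models -/
def MR (φ : Formula) : Prop :=
  ∀ (N M : KStruct), N.IsModel → M.IsModel →
    ∀ f : N.W → M.W, Monotonic N M f → ∀ w : N.W, M.sat (f w) φ → N.sat w φ

/-- `r` is a root of `M` -/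
def IsRoot (M : KStruct) (r : M.W) : Prop := ∀ w, M.R r w

/-- `M` is tree-like with root `r`: rooted, and each point has a finite,
linearly ordered set of predecessors -/
def IsTree (M : KStruct) (r : M.W) : Prop :=
  IsRoot M r ∧ (∀ w : M.W, {u | M.R u w}.Finite) ∧
  (∀ w u v : M.W, M.R u w → M.R v w → (M.R u v ∨ M.R v u))

/-- `u` is an immediate (proper) successor of `w` -/
def ImmSucc (M : KStruct) (w u : M.W) : Prop :=
  M.R w u ∧ w ≠ u ∧ ∀ v, M.R w v → M.R v u → v = w ∨ v = u

/-- `S` carries a color-preserving submodel of `M` -/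
def ColorPresSub (M : KStruct) (S : Set M.W) : Prop :=
  ∀ w ∈ S, ∀ u, M.R w u → ∃ v ∈ S, M.R w v ∧ ∀ p, M.V v p = M.V u p

/-! ## The β-formulas of finite models -/

/-- the variables among `p_0,…,p_{n-1}` true at `w` -/
def propList (M : KStruct) (n : ℕ) (w : M.W) : List Formula :=
  ((List.range n).filter (fun p => M.V w p)).map Formula.var

/-- the variables among `p_0,…,p_{n-1}` false at `w` -/
def notpropList (M : KStruct) (n : ℕ) (w : M.W) : List Formula :=
  ((List.range n).filter (fun p => !(M.V w p))).map Formula.var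

open Classical in
/-- the immediate successors of `w`, as a list -/
noncomputable def immSuccList (M : KStruct) [Fintype M.W] (w : M.W) : List M.W :=
  (Finset.univ.filter (fun u => ImmSucc M w u)).toList

/-- β(w), defined by recursion on the depth of `w` (computed with enough fuel):
`β(w) = ⋀prop(w) → (⋁notprop(w) ∨ β(w_1) ∨ … ∨ β(w_k))` where the `w_i` are the
immediate successors of `w` (for maximal `w` the last disjunct is the empty disjunction). -/
noncomputable def betaFuel (M : KStruct) [Fintype M.W] (n : ℕ) : ℕ → M.W → Formula
  | 0, _ => Formula.bot
  | (k+1), w =>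
      Formula.imp (listAnd (propList M n w))
        (listOr (notpropList M n w ++ (immSuccList M w).map (fun u => betaFuel M n k u)))

/-- β(w) for a point `w` of a finite `n`-model: `Fintype.card M.W` is an upper bound
for the depth of any point, so the recursion above never runs out of fuel. -/
noncomputable def beta (M : KStruct) [inst : Fintype M.W] (n : ℕ) (w : M.W) : Formula :=
  betaFuel M n (Fintype.card M.W) w

/-! ## Unravelings -/

/-- the unraveling `T_N` of a rooted model `(N, r)`: points are the finite sequences
`⟨r, w_1, …, w_k⟩` in which each entry is an immediate successor of the preceding one,
ordered by the initial-segment relation; such a sequence satisfies the same variables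
as its last entry. -/
def Unravel (M : KStruct) (r : M.W) : KStruct where
  W := {l : List M.W // l.head? = some r ∧ List.Chain' (ImmSucc M) l}
  R := fun σ τ => σ.1 <+: τ.1
  V := fun σ p => (σ.1.getLast?.map (fun w => M.V w p)).getD false

/-! ## Kripke frames -/

structure KFrame where
  W : Type
  R : W → W → Prop

namespace KFrame

/-- a Kripke frame: `R` is a partial order -/
def IsFrame (F : KFrame) : Prop :=
  (∀ w, F.R w w) ∧ (∀ w u v, F.R w u → F.R u v → F.R w v) ∧
  (∀ w u, F.R w u → F.R u w → w = u)

def Persistent (F : KFrame) (V : F.W → ℕ → Bool) : Prop :=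
  ∀ w u p, F.R w u → V w p = true → V u p = true

/-- the model on `F` given by a valuation -/
def model (F : KFrame) (V : F.W → ℕ → Bool) : KStruct := ⟨F.W, F.R, V⟩

/-- `F ⊨ φ` : `φ` is true at every point of every model on `F` -/
def valid (F : KFrame) (φ : Formula) : Prop :=
  ∀ V, F.Persistent V → ∀ w, (F.model V).sat w φ

/-- the substructure of `F` on a subset `S` of its domain, with the restricted order -/
def restrictF (F : KFrame) (S : Set F.W) : KFrame :=
  ⟨S, fun a b => F.R a.1 b.1⟩

end KFrame

/-- a monotonic map from a model `N` into a frame `F` which is color-consistent: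
`f(w) R f(u)` implies `col(w) ≤ col(u)` -/
def ColorConsistentMap (N : KStruct) (F : KFrame) (f : N.W → F.W) : Prop :=
  (∀ w u, N.R w u → F.R (f w) (f u)) ∧
  (∀ w u, F.R (f w) (f u) → ∀ p, N.V w p = true → N.V u p = true)


/-! ## The n-universal model 𝒯(n) for NNIL -/

/-- an `n`-color -/
abbrev Col (n : ℕ) := Fin n → Bool

/-- componentwise order on colors -/
def ColLE {n : ℕ} (c d : Col n) : Prop := ∀ i, c i = true → d i = true

def ColLT {n : ℕ} (c d : Col n) : Prop := ColLE c d ∧ c ≠ d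

/-- finite colored trees: a root color together with the list of subtrees
hanging above the root -/
inductive CTree (n : ℕ) : Type
  | node : Col n → List (CTree n) → CTree n

namespace CTree

variable {n : ℕ}

def color : CTree n → Col n
  | node c _ => c

def children : CTree n → List (CTree n)
  | node _ ts => ts

/-- the subtree of `t` at a position (a list of child indices) -/
def subt : List ℕ → CTree n → Option (CTree n)
  | [], t => some t
  | i :: l, t => (t.children[i]?).bind (subt l)

/-- the finite tree-like `n`-model determined by a colored tree: its worlds are
the positions of `t`, ordered by the initial-segment relation, and a position
satisfies `p_i` iff the color of the subtree there is `1` at `i`. -/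
def toModel (t : CTree n) : KStruct where
  W := {l : List ℕ // (subt l t).isSome = true}
  R := fun a b => a.1 <+: b.1
  V := fun a p =>
    if h : p < n then ((subt a.1 t).map (fun s => s.color ⟨p, h⟩)).getD false
    else false

/-- the root of the model of a tree -/
def root (t : CTree n) : t.toModel.W := ⟨[], rfl⟩

/-- an injective code of colors -/
def colCode (c : Col n) : ℕ := ∑ i : Fin n, (if c i then 2 ^ (i : ℕ) else 0)

/-- an injective code of lists of numbers -/
def listCode : List ℕ → ℕ
  | [] => 0
  | a :: l => Nat.pair a (listCode l) + 1

/-- an injective code of colored trees, used to order the children of every node of a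
tree in the universal model canonically -/
def code : CTree n → ℕ
  | node c ts => Nat.pair (colCode c) (listCode (ts.attach.map (fun x => code x.1)))
decreasing_by
  have := List.sizeOf_lt_of_mem x.2
  simp only [CTree.node.sizeOf_spec]
  omega

end CTree

/-- `MLE s t` (`s ≤ t`): there is a monotonic map from (the model of) `t` into `s` -/
def MLE {n : ℕ} (s t : CTree n) : Prop :=
  ∃ f : t.toModel.W → s.toModel.W, Monotonic t.toModel s.toModel f

/-- membership in the domain of the universal model `𝒯(n)`, built in layers:
layer 1 consists of the one-point trees (one for each color); a tree of a later layer
is built from a set `X` of pairwise `≤`-incomparable trees of earlier layers (encoded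
as a list sorted canonically by `code`) by adding a fresh root below whose color is
strictly smaller than every color occurring in the trees of `X`. -/
inductive UMem : {n : ℕ} → CTree n → Prop
  | single {n : ℕ} (c : Col n) : UMem (CTree.node c [])
  | step {n : ℕ} (c : Col n) (ts : List (CTree n)) :
      ts ≠ [] →
      (∀ t ∈ ts, UMem t) →
      List.Chain' (fun a b => CTree.code a < CTree.code b) ts →
      (∀ t ∈ ts, ∀ s ∈ ts, t ≠ s → ¬ MLE t s) →
      (∀ t ∈ ts, ∀ (l : List ℕ) (s : CTree n), CTree.subt l t = some s →
        ColLT c s.color) →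
      UMem (CTree.node c ts)

/-- the universal model `𝒯(n)`: its points are the trees in `UMem`, ordered by `≤`
(where `T_w ≤ T_u` iff there is a monotonic map from `T_u` into `T_w`), and the color
of a node is the color of the root of the corresponding tree. -/
def UnivModel (n : ℕ) : KStruct where
  W := {t : CTree n // UMem t}
  R := fun a b => MLE a.1 b.1
  V := fun a p => if h : p < n then a.1.color ⟨p, h⟩ else false

/-- mutual monotonic mappability (`≡`) of Kripke structures -/
def MEquiv (A B : KStruct) : Prop :=
  (∃ f : B.W → A.W, Monotonic B A f) ∧ (∃ g : A.W → B.W, Monotonic A B g)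

/-! The node `θ v` of `𝒯(n)` attached to a point `v` of an `n`-model `M` is built by recursion on
the color of `v`: its children are the `≤`-minimal nodes `θ x` for the successors `x` of `v` of
strictly larger color. The map `v ↦ θ v` is monotonic, so an MR-formula true at `θ w` is true at `w`.
Conversely, the relation "`θ v ≤ t` and `t` has the color of `v`" has the back property, so the
submodel of `M × 𝒯(n)` it carves out maps monotonically onto `M` and by a p-morphism onto `𝒯(n)`;
an MR-formula true at `w` is thus true at `(w, θ w)` and hence at `θ w`. Truncating the valuation
of `M` to `p_0, …, p_{n-1}` changes neither `φ` nor `ψ`. -/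

def colVal {n : ℕ} (c : Col n) (p : ℕ) : Bool := if h : p < n then c ⟨p, h⟩ else false

theorem colVal_mono {n : ℕ} {c d : Col n} (h : c ≤ d) {p : ℕ} (hc : colVal c p = true) :
    colVal d p = true := by
  unfold colVal at hc ⊢
  split_ifs at hc ⊢ with hp
  exact Bool.le_iff_imp.mp (h ⟨p, hp⟩) hc

theorem colVal_injective {n : ℕ} {c d : Col n} (h : ∀ p, colVal c p = colVal d p) : c = d := by
  funext i
  simpa [colVal] using h i

theorem colLT_iff_lt {n : ℕ} {c d : Col n} : ColLT c d ↔ c < d := by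
  simp only [ColLT, ColLE, lt_iff_le_and_ne, Pi.le_def, Bool.le_iff_imp]

namespace KStruct

def colv (M : KStruct) (n : ℕ) (v : M.W) : Col n := fun i => M.V v i

theorem IsModel.colv_mono {M : KStruct} (hM : M.IsModel) (n : ℕ) {v x : M.W} (h : M.R v x) :
    M.colv n v ≤ M.colv n x :=
  fun i => Bool.le_iff_imp.mpr (hM.2.2.2 v x i h)

theorem IsNModel.V_eq_colVal {M : KStruct} {n : ℕ} (hM : M.IsNModel n) (v : M.W) (p : ℕ) :
    M.V v p = colVal (M.colv n v) p := by
  unfold colVal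
  split_ifs with hp
  · rfl
  · exact hM.2 v p (not_lt.mp hp)

def truncate (M : KStruct) (n : ℕ) : KStruct where
  W := M.W
  R := M.R
  V v p := M.V v p && decide (p < n)

theorem IsModel.truncate_isNModel {M : KStruct} (hM : M.IsModel) (n : ℕ) :
    (M.truncate n).IsNModel n := by
  refine ⟨⟨hM.1, hM.2.1, hM.2.2.1, fun v x p h hv => ?_⟩, fun v p hp => by simp [truncate, hp]⟩
  simp only [truncate, Bool.and_eq_true] at hv ⊢
  exact ⟨hM.2.2.2 v x p h hv.1, hv.2⟩

theorem sat_truncate_iff (M : KStruct) {n : ℕ} {χ : Formula} (hχ : χ.varsBelow n) (v : M.W) :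
    (M.truncate n).sat v χ ↔ M.sat v χ := by
  induction χ generalizing v with
  | bot => rfl
  | var p => simp [sat, truncate, show p < n from hχ]
  | and φ ψ ihφ ihψ => exact and_congr (ihφ hχ.1 v) (ihψ hχ.2 v)
  | or φ ψ ihφ ihψ => exact or_congr (ihφ hχ.1 v) (ihψ hχ.2 v)
  | imp φ ψ ihφ ihψ =>
    exact forall_congr' fun u => imp_congr_right fun _ => imp_congr (ihφ hχ.1 u) (ihψ hχ.2 u)

end KStruct

theorem PMorphism.sat_iff {N M : KStruct} {f : N.W → M.W} (hf : PMorphism N M f) (χ : Formula)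
    (x : N.W) : N.sat x χ ↔ M.sat (f x) χ := by
  induction χ generalizing x with
  | bot => rfl
  | var p => simp only [KStruct.sat, hf.1.2 x p]
  | and φ ψ ihφ ihψ => exact and_congr (ihφ x) (ihψ x)
  | or φ ψ ihφ ihψ => exact or_congr (ihφ x) (ihψ x)
  | imp φ ψ ihφ ihψ =>
    constructor
    · intro hx u' hu' hφu'
      obtain ⟨u, hxu, rfl⟩ := hf.2 x u' hu'
      exact (ihψ u).mp (hx u hxu ((ihφ u).mpr hφu'))
    · intro hx u hxu hφu
      exact (ihψ u).mpr (hx (f u) (hf.1.1 x u hxu) ((ihφ u).mp hφu))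

/-- The submodel `E` of `M × N` maps monotonically onto `M` and by a p-morphism onto `N`. -/
theorem MR.sat_of_back {φ : Formula} (hφ : MR φ) {M N : KStruct} (hM : M.IsModel)
    (hN : N.IsModel) (E : M.W → N.W → Prop) (hV : ∀ v u, E v u → ∀ p, N.V u p = M.V v p)
    (hback : ∀ v u u', E v u → N.R u u' → ∃ v', M.R v v' ∧ E v' u')
    {v : M.W} {u : N.W} (hE : E v u) (hv : M.sat v φ) : N.sat u φ := by
  let P : KStruct :=
    { W := {x : M.W × N.W // E x.1 x.2}
      R := fun a b => M.R a.1.1 b.1.1 ∧ N.R a.1.2 b.1.2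
      V := fun a p => M.V a.1.1 p }
  have hP : P.IsModel :=
    ⟨fun _ => ⟨hM.1 _, hN.1 _⟩,
      fun _ _ _ hab hbc => ⟨hM.2.1 _ _ _ hab.1 hbc.1, hN.2.1 _ _ _ hab.2 hbc.2⟩,
      fun _ _ hab hba =>
        Subtype.ext (Prod.ext (hM.2.2.1 _ _ hab.1 hba.1) (hN.2.2.1 _ _ hab.2 hba.2)),
      fun _ _ p hab => hM.2.2.2 _ _ p hab.1⟩
  have hfst : Monotonic P M (fun a => a.1.1) := ⟨fun _ _ h => h.1, fun _ _ => rfl⟩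
  have hsnd : PMorphism P N (fun a => a.1.2) := by
    refine ⟨⟨fun _ _ h => h.2, fun a p => hV _ _ a.2 p⟩, fun a u' hu' => ?_⟩
    obtain ⟨v', hv', hE'⟩ := hback _ _ u' a.2 hu'
    exact ⟨⟨(v', u'), hE'⟩, ⟨hv', hu'⟩, rfl⟩
  exact (hsnd.sat_iff φ ⟨(v, u), hE⟩).mp (hφ P M hP hM _ hfst ⟨(v, u), hE⟩ hv)

namespace CTree

variable {n : ℕ}

theorem sizeOf_lt_of_mem_children {s t : CTree n} (h : s ∈ t.children) :
    sizeOf s < sizeOf t := by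
  obtain ⟨c, ts⟩ := t
  have := List.sizeOf_lt_of_mem (show s ∈ ts from h)
  simp only [node.sizeOf_spec]
  omega

theorem colCode_eq_sum (c : Col n) :
    colCode c = ∑ i ∈ (Finset.univ.filter (c ·)).map Fin.valEmbedding, 2 ^ i := by
  rw [Finset.sum_map, Finset.sum_filter]
  rfl

theorem colCode_injective : Function.Injective (colCode : Col n → ℕ) := by
  intro c d h
  rw [colCode_eq_sum, colCode_eq_sum] at h
  have h' := congrArg (fun k => k.bitIndices.toFinset) h
  simp only [Finset.toFinset_bitIndices_sum_two_pow, Finset.map_inj] at h'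
  funext i
  simpa using Finset.ext_iff.mp h' i

theorem listCode_injective : Function.Injective listCode := by
  intro l₁ l₂ h
  induction l₁ generalizing l₂ with
  | nil => cases l₂ <;> simp_all [listCode]
  | cons a l ih =>
    cases l₂ with
    | nil => simp [listCode] at h
    | cons b l' =>
      obtain ⟨rfl, hl⟩ := Nat.pair_eq_pair.mp (Nat.succ_injective h)
      rw [ih hl]

theorem code_node (c : Col n) (ts : List (CTree n)) :
    code (node c ts) = Nat.pair (colCode c) (listCode (ts.map code)) := by
  rw [code, List.attach_map_val]

theorem code_injective : Function.Injective (code : CTree n → ℕ)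
  | node c ts, node d ss, h => by
    rw [code_node, code_node] at h
    obtain ⟨hc, hts⟩ := Nat.pair_eq_pair.mp h
    have hmap := listCode_injective hts
    have hlen : ts.length = ss.length := by simpa using congrArg List.length hmap
    rw [colCode_injective hc, List.ext_getElem hlen fun i h₁ h₂ => code_injective <| by
      have := List.getElem_of_eq hmap (by simpa using h₁)
      rwa [List.getElem_map, List.getElem_map] at this]
termination_by t => t
decreasing_by exact sizeOf_lt_of_mem_children (List.getElem_mem h₁)

theorem sortedLT_map_code {l : List (CTree n)} (h : l.IsChain (fun a b => code a < code b)) :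
    (l.map code).SortedLT :=
  List.sortedLT_iff_pairwise.mpr (List.isChain_iff_pairwise.mp ((List.isChain_map code).mpr h))

theorem eq_of_chain_code {l₁ l₂ : List (CTree n)} (h₁ : l₁.IsChain (fun a b => code a < code b))
    (h₂ : l₂.IsChain (fun a b => code a < code b)) (h : ∀ x, x ∈ l₁ ↔ x ∈ l₂) : l₁ = l₂ :=
  List.map_injective_iff.mpr code_injective <|
    (sortedLT_map_code h₁).eq_of_mem_iff (sortedLT_map_code h₂) fun k => by simp [h]

instance : Nonempty (CTree n) := ⟨node (fun _ => false) []⟩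

open Classical in
noncomputable def sortByCode (S : Set (CTree n)) : List (CTree n) :=
  if h : S.Finite then ((h.image code).toFinset.sort (· ≤ ·)).map (Function.invFun code) else []

theorem mem_sortByCode {S : Set (CTree n)} (hS : S.Finite) {t : CTree n} :
    t ∈ sortByCode S ↔ t ∈ S := by
  classical
  simp only [sortByCode, dif_pos hS, List.mem_map, Finset.mem_sort, Set.Finite.mem_toFinset,
    Set.mem_image]
  constructor
  · rintro ⟨_, ⟨s, hs, rfl⟩, rfl⟩
    rwa [Function.leftInverse_invFun code_injective]
  · exact fun ht => ⟨_, ⟨t, ht, rfl⟩, Function.leftInverse_invFun code_injective t⟩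

theorem isChain_sortByCode (S : Set (CTree n)) :
    (sortByCode S).IsChain (fun a b => code a < code b) := by
  classical
  unfold sortByCode
  split_ifs with hS
  · set L := (hS.image code).toFinset.sort (· ≤ ·)
    have hL : (L.map (Function.invFun (code (n := n)))).map code = L := by
      refine List.map_map.trans (List.map_congr_left (g := id) fun k hk => ?_) |>.trans L.map_id
      obtain ⟨t, -, rfl⟩ : ∃ t ∈ S, code t = k := by simpa [L] using hk
      exact Function.invFun_eq ⟨t, rfl⟩
    rw [← List.isChain_map code, hL]
    exact (Finset.sortedLT_sort _).isChain
  · exact List.isChain_nil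

theorem subt_append (l₁ l₂ : List ℕ) (t : CTree n) :
    subt (l₁ ++ l₂) t = (subt l₁ t).bind (subt l₂) := by
  induction l₁ generalizing t with
  | nil => rfl
  | cons i l ih => simp [subt, ih, Option.bind_assoc]

theorem subt_cons_eq_some {i : ℕ} {l : List ℕ} {t s : CTree n} :
    subt (i :: l) t = some s ↔ ∃ t', t.children[i]? = some t' ∧ subt l t' = some s :=
  Option.bind_eq_some_iff

theorem subt_nil_eq_some {t s : CTree n} : subt [] t = some s ↔ t = s := Option.some_inj

theorem exists_subt_of_prefix {l₁ l₂ : List ℕ} {t s : CTree n} (h : l₁ <+: l₂)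
    (hs : subt l₂ t = some s) : ∃ s₁, subt l₁ t = some s₁ := by
  obtain ⟨r, rfl⟩ := h
  obtain ⟨s₁, hs₁, -⟩ := Option.bind_eq_some_iff.mp ((subt_append l₁ r t).symm.trans hs)
  exact ⟨s₁, hs₁⟩

theorem subt_singleton_of_mem {t s : CTree n} (h : s ∈ t.children) :
    ∃ i, subt [i] t = some s := by
  obtain ⟨i, hi⟩ := List.mem_iff_getElem?.mp h
  exact ⟨i, subt_cons_eq_some.mpr ⟨s, hi, rfl⟩⟩

instance : Preorder (CTree n) where
  le := MLE
  le_refl _ := ⟨id, fun _ _ h => h, fun _ _ => rfl⟩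
  le_trans _ _ _ := fun ⟨f, hf⟩ ⟨g, hg⟩ =>
    ⟨f ∘ g, fun x y h => hf.1 _ _ (hg.1 x y h), fun x p => (hf.2 (g x) p).trans (hg.2 x p)⟩

theorem toModel_V_of_subt {t s : CTree n} {x : t.toModel.W} (h : subt x.1 t = some s) (p : ℕ) :
    t.toModel.V x p = colVal s.color p := by
  simp only [toModel, h, colVal]
  split_ifs <;> rfl

/-- A monotonic map `t.toModel → s.toModel`, written on positions. -/
def IsPosMap (s t : CTree n) (g : List ℕ → List ℕ) : Prop :=
  (∀ l t', subt l t = some t' → ∃ s', subt (g l) s = some s' ∧ s'.color = t'.color) ∧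
  (∀ l₁ l₂ t', subt l₂ t = some t' → l₁ <+: l₂ → g l₁ <+: g l₂)

theorem le_iff_exists_isPosMap {s t : CTree n} : s ≤ t ↔ ∃ g, IsPosMap s t g := by
  constructor
  · rintro ⟨f, hR, hV⟩
    classical
    refine ⟨fun l => if h : (subt l t).isSome then (f ⟨l, h⟩).1 else [], fun l t' ht' => ?_,
      fun l₁ l₂ t' ht' h₁₂ => ?_⟩
    · have hl : (subt l t).isSome := by simp [ht']
      obtain ⟨s', hs'⟩ := Option.isSome_iff_exists.mp (f ⟨l, hl⟩).2
      refine ⟨s', by simpa [hl] using hs', colVal_injective fun p => ?_⟩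
      rw [← toModel_V_of_subt hs', ← toModel_V_of_subt (x := ⟨l, hl⟩) ht']
      exact hV ⟨l, hl⟩ p
    · obtain ⟨t₁, ht₁⟩ := exists_subt_of_prefix h₁₂ ht'
      have h₁ : (subt l₁ t).isSome := by simp [ht₁]
      have h₂ : (subt l₂ t).isSome := by simp [ht']
      simp only [h₁, h₂, dite_true]
      exact hR ⟨l₁, h₁⟩ ⟨l₂, h₂⟩ h₁₂
  · rintro ⟨g, hcol, hmono⟩
    have hpos : ∀ x : t.toModel.W, ∃ t' s', subt x.1 t = some t' ∧ subt (g x.1) s = some s' ∧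
        s'.color = t'.color := fun x => by
      obtain ⟨t', ht'⟩ := Option.isSome_iff_exists.mp x.2
      obtain ⟨s', hs'⟩ := hcol _ _ ht'
      exact ⟨t', s', ht', hs'⟩
    refine ⟨fun x => ⟨g x.1, ?_⟩, fun x y hxy => ?_, fun x p => ?_⟩
    · obtain ⟨-, s', -, hs', -⟩ := hpos x
      simp [hs']
    · obtain ⟨t', -, ht', -⟩ := hpos y
      exact hmono _ _ _ ht' hxy
    · obtain ⟨t', s', ht', hs', hc⟩ := hpos x
      rw [toModel_V_of_subt (x := ⟨g x.1, _⟩) hs', toModel_V_of_subt ht', hc]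

theorem le_of_subt {q : List ℕ} {s s' : CTree n} (h : subt q s = some s') : s ≤ s' := by
  refine le_iff_exists_isPosMap.mpr ⟨(q ++ ·), fun l t' ht' => ⟨t', ?_, rfl⟩,
    fun _ _ _ _ h₁₂ => (List.prefix_append_right_inj q).mpr h₁₂⟩
  rw [subt_append, h]
  exact ht'

theorem le_of_mem_children {s t : CTree n} (h : s ∈ t.children) : t ≤ s :=
  (subt_singleton_of_mem h).elim fun _ => le_of_subt

theorem le_of_forall_children {s t : CTree n} (hc : s.color = t.color)
    (h : ∀ b ∈ t.children, ∃ a ∈ s.children, a ≤ b) : s ≤ t := by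
  obtain ⟨c, as⟩ := s
  obtain ⟨c, bs⟩ := t
  obtain rfl : _ = c := hc
  have H : ∀ i (hi : i < bs.length), ∃ j a g, as[j]? = some a ∧ IsPosMap a bs[i] g :=
    fun i hi => by
      obtain ⟨a, ha, hab⟩ := h bs[i] (List.getElem_mem hi)
      obtain ⟨j, hj⟩ := List.mem_iff_getElem?.mp ha
      obtain ⟨g, hg⟩ := le_iff_exists_isPosMap.mp hab
      exact ⟨j, a, g, hj, hg⟩
  choose J A G hA hG using H
  let g : List ℕ → List ℕ
    | [] => []
    | i :: l => if hi : i < bs.length then J i hi :: G i hi l else []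
  have hg : ∀ i (hi : i < bs.length) l, g (i :: l) = J i hi :: G i hi l :=
    fun i hi l => dif_pos hi
  refine le_iff_exists_isPosMap.mpr ⟨g, fun l t' ht' => ?_, fun l₁ l₂ t' ht' h₁₂ => ?_⟩
  · cases l with
    | nil => exact ⟨node c as, rfl, by rw [← subt_nil_eq_some.mp ht']; rfl⟩
    | cons i l =>
      obtain ⟨b, hb, hlb⟩ := subt_cons_eq_some.mp ht'
      obtain ⟨hi, rfl⟩ := List.getElem?_eq_some_iff.mp hb
      obtain ⟨s', hs', hc⟩ := (hG i hi).1 l t' hlb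
      exact ⟨s', hg i hi l ▸ subt_cons_eq_some.mpr ⟨_, hA i hi, hs'⟩, hc⟩
  · obtain ⟨r, rfl⟩ := h₁₂
    cases l₁ with
    | nil => exact List.nil_prefix
    | cons i l =>
      obtain ⟨b, hb, hlb⟩ := subt_cons_eq_some.mp ht'
      obtain ⟨hi, rfl⟩ := List.getElem?_eq_some_iff.mp hb
      rw [List.cons_append, hg i hi, hg i hi]
      exact List.cons_prefix_cons.mpr
        ⟨rfl, (hG i hi).2 l (l ++ r) t' hlb (List.prefix_append l r)⟩

theorem exists_subt_le {s t : CTree n} (h : s ≤ t) :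
    ∃ q s', subt q s = some s' ∧ s'.color = t.color ∧ s' ≤ t := by
  obtain ⟨g, hcol, hmono⟩ := le_iff_exists_isPosMap.mp h
  obtain ⟨s', hs', hc⟩ := hcol [] t rfl
  have hext : ∀ l t', subt l t = some t' → ∃ r, g l = g [] ++ r := fun l t' ht' =>
    (hmono [] l t' ht' List.nil_prefix).elim fun r hr => ⟨r, hr.symm⟩
  refine ⟨g [], s', hs', hc, le_iff_exists_isPosMap.mpr
    ⟨fun l => (g l).drop (g []).length, fun l t' ht' => ?_, fun l₁ l₂ t' ht' h₁₂ => ?_⟩⟩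
  · obtain ⟨r, hr⟩ := hext l t' ht'
    obtain ⟨s'', hs'', hc'⟩ := hcol l t' ht'
    rw [hr, subt_append, hs'] at hs''
    exact ⟨s'', by simpa [hr] using hs'', hc'⟩
  · obtain ⟨r₂, hr₂⟩ := hext l₂ t' ht'
    obtain ⟨t₁, ht₁⟩ := exists_subt_of_prefix h₁₂ ht'
    obtain ⟨r₁, hr₁⟩ := hext l₁ t₁ ht₁
    have := hmono l₁ l₂ t' ht' h₁₂
    rw [hr₁, hr₂, List.prefix_append_right_inj] at this
    simpa [hr₁, hr₂] using this

end CTree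

namespace UMem

open CTree

variable {n : ℕ} {s t : CTree n}

theorem of_mem_children (h : UMem t) (hs : s ∈ t.children) : UMem s := by
  rcases h with _ | ⟨c, ts, -, hU, -, -, -⟩
  exacts [absurd hs List.not_mem_nil, hU s hs]

theorem children_isChain (h : UMem t) : t.children.IsChain (fun a b => code a < code b) := by
  rcases h with _ | ⟨c, ts, -, -, hchain, -, -⟩
  exacts [List.isChain_nil, hchain]

theorem not_le_of_mem_children (h : UMem t) {a b : CTree n} (ha : a ∈ t.children)
    (hb : b ∈ t.children) (hab : a ≠ b) : ¬ a ≤ b := by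
  rcases h with _ | ⟨c, ts, -, -, -, hinc, -⟩
  exacts [absurd ha List.not_mem_nil, hinc a ha b hb hab]

theorem color_lt_of_subt_cons (h : UMem t) {i : ℕ} {l : List ℕ}
    (hs : subt (i :: l) t = some s) : t.color < s.color := by
  obtain ⟨t', ht', hs'⟩ := subt_cons_eq_some.mp hs
  rcases h with _ | ⟨c, ts, -, -, -, -, hcol⟩
  · simp [children] at ht'
  · exact colLT_iff_lt.mp (hcol t' (List.mem_of_getElem? ht') l s hs')

theorem color_le_of_subt (h : UMem t) {l : List ℕ} (hs : subt l t = some s) :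
    t.color ≤ s.color := by
  cases l with
  | nil => rw [subt_nil_eq_some.mp hs]
  | cons i l => exact (h.color_lt_of_subt_cons hs).le

theorem color_le_of_le (h : UMem s) (hst : s ≤ t) : s.color ≤ t.color := by
  obtain ⟨q, s', hs', hc, -⟩ := exists_subt_le hst
  exact hc ▸ h.color_le_of_subt hs'

/-- The image of a child of `t` cannot be the root of `s`, whose color is that of `t` and hence
strictly smaller; so it lies above a child of `s`. -/
theorem exists_child_le (ht : UMem t) (hc : s.color = t.color) (hst : s ≤ t) :
    ∀ t' ∈ t.children, ∃ s' ∈ s.children, s' ≤ t' := by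
  intro t' ht'
  obtain ⟨i, hi⟩ := subt_singleton_of_mem ht'
  obtain ⟨q, s'', hs'', hc', hle⟩ := exists_subt_le (hst.trans (le_of_mem_children ht'))
  cases q with
  | nil =>
    rw [← subt_nil_eq_some.mp hs'', hc] at hc'
    exact absurd hc' (ht.color_lt_of_subt_cons hi).ne
  | cons j r =>
    obtain ⟨s', hs', hr⟩ := subt_cons_eq_some.mp hs''
    exact ⟨s', List.mem_of_getElem? hs', (le_of_subt hr).trans hle⟩

theorem ext (hs : UMem s) (ht : UMem t) (hc : s.color = t.color)
    (hch : ∀ x, x ∈ s.children ↔ x ∈ t.children) : s = t := by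
  obtain ⟨c, ss⟩ := s
  obtain ⟨d, ts⟩ := t
  obtain rfl : c = d := hc
  exact congrArg (node c) (eq_of_chain_code hs.children_isChain ht.children_isChain hch)

theorem children_subset_of_le_of_le (hs : UMem s) (ht : UMem t) (hc : s.color = t.color)
    (hst : s ≤ t) (hts : t ≤ s)
    (ih : ∀ x ∈ s.children, ∀ y ∈ t.children, x ≤ y → y ≤ x → x = y) :
    ∀ x ∈ s.children, x ∈ t.children := by
  intro x hx
  obtain ⟨y, hy, hyx⟩ := hs.exists_child_le hc.symm hts x hx
  obtain ⟨x', hx', hx'y⟩ := ht.exists_child_le hc hst y hy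
  obtain rfl : x' = x := by
    by_contra hne
    exact hs.not_le_of_mem_children hx' hx hne (hx'y.trans hyx)
  exact ih x' hx y hy hx'y hyx ▸ hy

protected theorem le_antisymm {s t : CTree n} (hs : UMem s) (ht : UMem t) (hst : s ≤ t)
    (hts : t ≤ s) : s = t := by
  have hc := le_antisymm (hs.color_le_of_le hst) (ht.color_le_of_le hts)
  have ih : ∀ x ∈ s.children, ∀ y ∈ t.children, x ≤ y → y ≤ x → x = y := fun x hx y hy =>
    UMem.le_antisymm (hs.of_mem_children hx) (ht.of_mem_children hy)
  exact hs.ext ht hc fun x => ⟨hs.children_subset_of_le_of_le ht hc hst hts ih x,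
    ht.children_subset_of_le_of_le hs hc.symm hts hst
      (fun y hy x hx hyx hxy => (ih x hx y hy hxy hyx).symm) x⟩
termination_by sizeOf s + sizeOf t
decreasing_by
  all_goals
    have := sizeOf_lt_of_mem_children hx
    have := sizeOf_lt_of_mem_children hy
    omega

/-- Downward induction on the root color `c`: the children of such a tree have root colors `> c`,
and a tree of `𝒯(n)` is determined by its root color and its set of children. -/
theorem finite : {t : CTree n | UMem t}.Finite := by
  have key : ∀ c : Col n, {t : CTree n | UMem t ∧ t.color = c}.Finite := fun c =>
    WellFoundedGT.induction (motive := fun c => {t : CTree n | UMem t ∧ t.color = c}.Finite) c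
      fun c ih => by
        refine Set.Finite.of_finite_image (f := fun t => {x | x ∈ t.children})
          (((Set.toFinite (Set.Ioi c)).biUnion ih).finite_subsets.subset ?_) ?_
        · rintro _ ⟨t, ⟨ht, rfl⟩, rfl⟩ x hx
          obtain ⟨i, hi⟩ := subt_singleton_of_mem hx
          exact Set.mem_biUnion (ht.color_lt_of_subt_cons hi) ⟨ht.of_mem_children hx, rfl⟩
        · rintro s ⟨hs, rfl⟩ t ⟨ht, htc⟩ hst
          exact hs.ext ht htc.symm fun x => Set.ext_iff.mp hst x
  exact (Set.finite_iUnion key).subset fun t ht => Set.mem_iUnion.mpr ⟨t.color, ht, rfl⟩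

end UMem

theorem UnivModel.isModel (n : ℕ) : (UnivModel n).IsModel :=
  ⟨fun t => le_refl t.1,
    fun _ _ _ (h₁ : MLE _ _) (h₂ : MLE _ _) => le_trans (α := CTree n) h₁ h₂,
    fun a b hab hba => Subtype.ext (a.2.le_antisymm b.2 hab hba),
    fun a _ _ hab => colVal_mono (a.2.color_le_of_le hab)⟩

namespace KStruct

variable {M : KStruct} {n : ℕ}

variable (M n) in
/-- The node `θ v`; the recursion is downwards on the color of `v`, well founded as `Col n` is
finite. -/
noncomputable def canonTree : M.W → CTree n :=
  (InvImage.wf (M.colv n) wellFounded_gt).fix fun v θ =>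
    .node (M.colv n v) (CTree.sortByCode
      {t | Minimal (· ∈ {t | UMem t ∧ ∃ x h, M.R v x ∧ θ x h = t}) t})

variable (M n) in
def upperTrees (v : M.W) : Set (CTree n) :=
  {t | UMem t ∧ ∃ x, M.R v x ∧ M.colv n v < M.colv n x ∧ M.canonTree n x = t}

theorem canonTree_eq (v : M.W) : M.canonTree n v =
    .node (M.colv n v) (CTree.sortByCode {t | Minimal (· ∈ M.upperTrees n v) t}) := by
  rw [canonTree, WellFounded.fix_eq]
  simp only [upperTrees, exists_prop, and_left_comm]
  rfl

theorem color_canonTree (v : M.W) : (M.canonTree n v).color = M.colv n v := by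
  rw [canonTree_eq]
  rfl

theorem upperTrees_finite (v : M.W) : (M.upperTrees n v).Finite :=
  UMem.finite.subset fun _ ht => ht.1

theorem mem_children_canonTree {v : M.W} {t : CTree n} :
    t ∈ (M.canonTree n v).children ↔ Minimal (· ∈ M.upperTrees n v) t := by
  rw [canonTree_eq]
  exact CTree.mem_sortByCode ((upperTrees_finite v).subset fun _ ht => ht.1)

theorem exists_mem_children_canonTree_le {v : M.W} {t : CTree n} (ht : t ∈ M.upperTrees n v) :
    ∃ m ∈ (M.canonTree n v).children, m ≤ t := by
  obtain ⟨m, hmt, hm⟩ := (upperTrees_finite v).exists_le_minimal ht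
  exact ⟨m, mem_children_canonTree.mpr hm, hmt⟩

theorem IsModel.exists_of_subt_canonTree (hM : M.IsModel) (v : M.W) {l : List ℕ} {s : CTree n}
    (hs : CTree.subt l (M.canonTree n v) = some s) : ∃ x, M.R v x ∧ M.canonTree n x = s := by
  induction v using (InvImage.wf (M.colv n) wellFounded_gt).induction generalizing l with
  | _ v ih =>
    cases l with
    | nil => exact ⟨v, hM.1 v, CTree.subt_nil_eq_some.mp hs⟩
    | cons i l =>
      obtain ⟨t, ht, hs⟩ := CTree.subt_cons_eq_some.mp hs
      obtain ⟨-, x, hvx, hlt, rfl⟩ := (mem_children_canonTree.mp (List.mem_of_getElem? ht)).1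
      obtain ⟨y, hxy, rfl⟩ := ih x hlt hs
      exact ⟨y, hM.2.1 v x y hvx hxy, rfl⟩

theorem IsModel.canonTree_umem (hM : M.IsModel) (v : M.W) : UMem (M.canonTree n v) := by
  have hmin {t} (ht : t ∈ (M.canonTree n v).children) := mem_children_canonTree.mp ht
  rw [canonTree_eq] at hmin ⊢
  set ts := CTree.sortByCode {t | Minimal (· ∈ M.upperTrees n v) t}
  rcases eq_or_ne ts [] with hts | hts
  · exact hts ▸ UMem.single _
  refine .step _ ts hts (fun t ht => (hmin ht).1.1) (CTree.isChain_sortByCode _)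
    (fun t ht s hs hne hle =>
      hne ((hmin ht).1.1.le_antisymm (hmin hs).1.1 hle ((hmin hs).le_of_le (hmin ht).1 hle)))
    (fun t ht l s hs => colLT_iff_lt.mpr ?_)
  obtain ⟨-, x, hvx, hlt, rfl⟩ := (hmin ht).1
  obtain ⟨y, hxy, rfl⟩ := hM.exists_of_subt_canonTree x hs
  exact color_canonTree (M := M) y ▸ hlt.trans_le (hM.colv_mono n hxy)

theorem IsModel.canonTree_mono (hM : M.IsModel) {v x : M.W} (h : M.R v x) :
    M.canonTree n v ≤ M.canonTree n x := by
  rcases (hM.colv_mono n h).lt_or_eq with hlt | heq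
  · obtain ⟨m, hm, hmx⟩ :=
      exists_mem_children_canonTree_le ⟨hM.canonTree_umem x, x, h, hlt, rfl⟩
    exact (CTree.le_of_mem_children hm).trans hmx
  · refine CTree.le_of_forall_children (by rw [color_canonTree, color_canonTree, heq])
      fun t ht => exists_mem_children_canonTree_le ?_
    obtain ⟨hU, y, hxy, hlt, rfl⟩ := (mem_children_canonTree.mp ht).1
    exact ⟨hU, y, hM.2.1 _ _ _ h hxy, heq ▸ hlt, rfl⟩

theorem IsModel.exists_canonTree_le (hM : M.IsModel) {v : M.W} {t : CTree n}
    (h : M.canonTree n v ≤ t) :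
    ∃ v', M.R v v' ∧ M.colv n v' = t.color ∧ M.canonTree n v' ≤ t := by
  obtain ⟨q, s, hs, hc, hst⟩ := CTree.exists_subt_le h
  obtain ⟨v', hvv', rfl⟩ := hM.exists_of_subt_canonTree v hs
  exact ⟨v', hvv', (color_canonTree v').symm.trans hc, hst⟩

variable (n) in
noncomputable def IsModel.toUniv (hM : M.IsModel) (v : M.W) : (UnivModel n).W :=
  ⟨M.canonTree n v, hM.canonTree_umem v⟩

theorem IsNModel.V_toUniv (hM : M.IsNModel n) (v : M.W) (p : ℕ) :
    (UnivModel n).V (hM.1.toUniv n v) p = M.V v p :=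
  (congrArg (colVal · p) (color_canonTree v)).trans (hM.V_eq_colVal v p).symm

theorem IsNModel.sat_toUniv_iff (hM : M.IsNModel n) {φ : Formula} (hφ : MR φ) (v : M.W) :
    (UnivModel n).sat (hM.1.toUniv n v) φ ↔ M.sat v φ := by
  refine ⟨hφ M _ hM.1 (UnivModel.isModel n) (hM.1.toUniv n)
      ⟨fun _ _ h => hM.1.canonTree_mono h, hM.V_toUniv⟩ v,
    hφ.sat_of_back hM.1 (UnivModel.isModel n)
      (fun v t => M.canonTree n v ≤ t.1 ∧ M.colv n v = t.1.color) ?_ ?_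
      ⟨le_rfl, (color_canonTree v).symm⟩⟩
  · rintro v t ⟨-, hc⟩ p
    exact (congrArg (colVal · p) hc.symm).trans (hM.V_eq_colVal v p).symm
  · rintro v t t' ⟨hle, -⟩ htt'
    obtain ⟨v', hvv', hc, hle'⟩ := hM.1.exists_canonTree_le (hle.trans htt')
    exact ⟨v', hvv', hle', hc⟩

end KStruct

/-- if an MR-formula `φ` in `n` variables is satisfiable together with
the failure of an MR-formula `ψ` in `n` variables at a point of some Kripke model,
then this is witnessed at some node of the universal model `𝒯(n)`. -/
theorem univ_model_provides_counterexamples (n : ℕ) (φ ψ : Formula)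
    (hφ : MR φ) (hψ : MR ψ) (hvφ : φ.varsBelow n) (hvψ : ψ.varsBelow n)
    (M : KStruct) (hM : M.IsModel) (w : M.W)
    (h1 : M.sat w φ) (h2 : ¬ M.sat w ψ) :
    ∃ u : (UnivModel n).W, (UnivModel n).sat u φ ∧ ¬ (UnivModel n).sat u ψ := by
  have hMn := hM.truncate_isNModel n
  refine ⟨hMn.1.toUniv n w, (hMn.sat_toUniv_iff hφ w).mpr ((M.sat_truncate_iff hvφ w).mpr h1),
    fun hψw => h2 ?_⟩
  exact (M.sat_truncate_iff hvψ w).mp ((hMn.sat_toUniv_iff hψ w).mp hψw)
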